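/- arXiv:2101.00241 — 4 statements merged into one kernel-verified Lean document; each statement's English description precedes it below -/
import Mathlib

section
/- Let V and V̄ be real Hilbert spaces with inner products a(·,·) and ā(·,·) inducing norms ‖·‖_A and ‖·‖_Ā, and let Π : V̄ → V be a bounded linear surjection. Suppose (i) there exists c₀ > 0 such that for every v ∈ V there is v̄ ∈ V̄ with Πv̄ = v and ‖v̄‖_Ā ≤ c₀‖v‖_A, and (ii) there exists c₁ > 0 such that ‖Πv̄‖_A ≤ c₁‖v̄‖_Ā for all v̄ ∈ V̄. Define B = Π ∘ Ā⁻¹ ∘ Π* : V' → V, where A : V → V' and Ā : V̄ → V̄' are the Riesz operators of a and ā. Then for all v ∈ V, c₀⁻²‖v‖_A² ≤ a(BAv, v) ≤ c₁²‖v‖_A². (Fictitious Space Lemma) -/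
/-!
The map `v ↦ Ā⁻¹ Π* A v` is the Hilbert adjoint `Π†`, so `a(BA v, v) = ‖Π† v‖²` and both bounds
are bounds on `‖Π† v‖`. The upper one is `‖Π†‖ = ‖Π‖ ≤ c₁`. For the lower one, lift `v` to `w`
with `Π w = v`, `‖w‖ ≤ c₀ ‖v‖`; then `‖v‖² = ⟪w, Π† v⟫ ≤ c₀ ‖v‖ ‖Π† v‖`.
-/

open InnerProductSpace InnerProduct

namespace ContinuousLinearMap

variable {E F : Type*} [NormedAddCommGroup E] [InnerProductSpace ℝ E] [CompleteSpace E]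
  [NormedAddCommGroup F] [InnerProductSpace ℝ F] [CompleteSpace F]

theorem toDual_symm_toDual_comp_eq_adjoint (T : E →L[ℝ] F) (y : F) :
    (toDual ℝ E).symm ((toDual ℝ F y : F →L[ℝ] ℝ).comp T) = (T†) y :=
  ext_inner_right ℝ fun x => by
    rw [toDual_symm_apply, adjoint_inner_left]
    rfl

theorem inner_apply_adjoint_apply_self (T : E →L[ℝ] F) (y : F) :
    inner ℝ (T ((T†) y)) y = ‖(T†) y‖ ^ 2 := by
  rw [← adjoint_inner_right, real_inner_self_eq_norm_sq]

theorem norm_adjoint_apply_le_of_forall_norm_apply_le (T : E →L[ℝ] F) {c : ℝ} (hc : 0 ≤ c)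
    (hT : ∀ x, ‖T x‖ ≤ c * ‖x‖) (y : F) : ‖(T†) y‖ ≤ c * ‖y‖ :=
  calc ‖(T†) y‖ ≤ ‖T†‖ * ‖y‖ := le_opNorm _ _
    _ = ‖T‖ * ‖y‖ := by rw [LinearIsometryEquiv.norm_map]
    _ ≤ c * ‖y‖ := by gcongr; exact opNorm_le_bound T hc hT

theorem norm_le_mul_norm_adjoint_apply_of_stable_preimage (T : E →L[ℝ] F) {c : ℝ}
    (hT : ∀ y, ∃ x, T x = y ∧ ‖x‖ ≤ c * ‖y‖) (y : F) : ‖y‖ ≤ c * ‖(T†) y‖ := by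
  rcases eq_or_ne y 0 with rfl | hy
  · simp
  obtain ⟨x, hxy, hx⟩ := hT y
  have key : ‖y‖ * ‖y‖ ≤ ‖y‖ * (c * ‖(T†) y‖) :=
    calc ‖y‖ * ‖y‖ = inner ℝ x ((T†) y) := by
          rw [adjoint_inner_right, hxy, real_inner_self_eq_norm_mul_norm]
      _ ≤ ‖x‖ * ‖(T†) y‖ := real_inner_le_norm _ _
      _ ≤ c * ‖y‖ * ‖(T†) y‖ := by gcongr
      _ = ‖y‖ * (c * ‖(T†) y‖) := by ring
  exact le_of_mul_le_mul_left key (norm_pos_iff.mpr hy)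

end ContinuousLinearMap

theorem fictitious_space_lemma_general
    {V W : Type*} [NormedAddCommGroup V] [InnerProductSpace ℝ V] [CompleteSpace V]
    [NormedAddCommGroup W] [InnerProductSpace ℝ W] [CompleteSpace W]
    (Pi : W →L[ℝ] V) (c₀ c₁ : ℝ) (hc₁ : 0 < c₁)
    (hstable : ∀ v : V, ∃ w : W, Pi w = v ∧ ‖w‖ ≤ c₀ * ‖v‖)
    (hcont : ∀ w : W, ‖Pi w‖ ≤ c₁ * ‖w‖)
    (BA : V → V)
    (hBA : ∀ v : V, BA v =
      Pi ((InnerProductSpace.toDual ℝ W).symm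
        (((InnerProductSpace.toDual ℝ V v) : V →L[ℝ] ℝ).comp Pi))) :
    ∀ v : V, (c₀ ^ 2)⁻¹ * ‖v‖ ^ 2 ≤ (inner ℝ (BA v) v : ℝ) ∧
      (inner ℝ (BA v) v : ℝ) ≤ c₁ ^ 2 * ‖v‖ ^ 2 := by
  intro v
  rw [hBA, Pi.toDual_symm_toDual_comp_eq_adjoint, Pi.inner_apply_adjoint_apply_self]
  have lower := Pi.norm_le_mul_norm_adjoint_apply_of_stable_preimage hstable v
  have upper := Pi.norm_adjoint_apply_le_of_forall_norm_apply_le hc₁.le hcont v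
  constructor
  · refine inv_mul_le_of_le_mul₀ (sq_nonneg _) (sq_nonneg _) ?_
    rw [← mul_pow]
    exact pow_le_pow_left₀ (norm_nonneg _) lower 2
  · rw [← mul_pow]
    exact pow_le_pow_left₀ (norm_nonneg _) upper 2

/-- **Fictitious Space Lemma.**
`V` and `W` (= V̄) are real Hilbert spaces, `Π : W → V` a bounded surjective linear map.
`A`, `Abar` are the Riesz maps (`InnerProductSpace.toDual`), `Π*` is the dual map
`f ↦ f ∘ Π`, and `B = Π ∘ Abar⁻¹ ∘ Π*`, so `BA v = Π (Abar⁻¹ ((A v) ∘ Π))`.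
If the stable-lifting bound with constant `c₀` and the continuity bound with
constant `c₁` hold, then `c₀⁻² ‖v‖² ≤ a(BA v, v) ≤ c₁² ‖v‖²` for all `v`. -/
theorem fictitious_space_lemma
    {V W : Type*} [NormedAddCommGroup V] [InnerProductSpace ℝ V] [CompleteSpace V]
    [NormedAddCommGroup W] [InnerProductSpace ℝ W] [CompleteSpace W]
    (Pi : W →L[ℝ] V) (c₀ c₁ : ℝ) (hc₀ : 0 < c₀) (hc₁ : 0 < c₁)
    (hsurj : Function.Surjective Pi)
    (hstable : ∀ v : V, ∃ w : W, Pi w = v ∧ ‖w‖ ≤ c₀ * ‖v‖)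
    (hcont : ∀ w : W, ‖Pi w‖ ≤ c₁ * ‖w‖)
    (BA : V → V)
    (hBA : ∀ v : V, BA v =
      Pi ((InnerProductSpace.toDual ℝ W).symm
        (((InnerProductSpace.toDual ℝ V v) : V →L[ℝ] ℝ).comp Pi))) :
    ∀ v : V, (c₀ ^ 2)⁻¹ * ‖v‖ ^ 2 ≤ (inner ℝ (BA v) v : ℝ) ∧
      (inner ℝ (BA v) v : ℝ) ≤ c₁ ^ 2 * ‖v‖ ^ 2 :=
  fictitious_space_lemma_general Pi c₀ c₁ hc₁ hstable hcont BA hBA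
end

section
/- Let H be a real Hilbert space with inner product a(·,·), and let W₁, …, W_J be Hilbert spaces with inner products a_j(·,·) and bounded linear operators Π_j : W_j → H satisfying ‖Π_j w_j‖_A² ≤ c_j² a_j(w_j, w_j) for all w_j ∈ W_j. Let s(·,·) be an inner product on H (the smoother) with ‖v‖_A² ≤ c_S² s(v,v) for all v ∈ H. Suppose every v ∈ H admits a decomposition v = v₀ + Σ_{j=1}^J Π_j w_j with s(v₀,v₀) + Σ_j a_j(w_j,w_j) ≤ c₀²‖v‖_A². Then the auxiliary space preconditioner B = S⁻¹ + Σ_j Π_j A_j⁻¹ Π_j* satisfies κ(BA) ≤ c₀²(c_S² + c₁² + ⋯ + c_J²). -/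
/-!
Write `y = S⁻¹ x` and `u_j = Π_j† x`. Then `⟪B A x, x⟫ = s(y, y) + ∑ ‖u_j‖²`. Cauchy–Schwarz
together with the bounds on `S` and on `Π_j` gives `s(y, y) ≤ c_S² ‖x‖²` and `‖u_j‖ ≤ c_j ‖x‖`,
which is the upper bound. For the lower bound, test `x` against a stable decomposition
`x = v₀ + ∑ Π_j w_j`: `‖x‖² = s(y, v₀) + ∑ ⟪u_j, w_j⟫`. Weighted AM–GM with weight `c₀²` bounds
twice this by `c₀² ⟪B A x, x⟫ + c₀⁻² (s(v₀, v₀) + ∑ ‖w_j‖²) ≤ c₀² ⟪B A x, x⟫ + ‖x‖²`.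
-/

open InnerProductSpace ContinuousLinearMap
open scoped RealInnerProductSpace

section Hilbert

variable {E F : Type*} [NormedAddCommGroup E] [InnerProductSpace ℝ E]
  [NormedAddCommGroup F] [InnerProductSpace ℝ F]

theorem ContinuousLinearMap.IsPositive.two_mul_inner_le {S : E →L[ℝ] E} (hS : S.IsPositive)
    {t : ℝ} (ht : 0 < t) (x y : E) :
    2 * ⟪S x, y⟫ ≤ t * ⟪S x, x⟫ + t⁻¹ * ⟪S y, y⟫ := by
  have hnonneg : 0 ≤ ⟪S (t • x - y), t • x - y⟫ := hS.re_inner_nonneg_left _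
  have hexpand : ⟪S (t • x - y), t • x - y⟫ = t ^ 2 * ⟪S x, x⟫ - 2 * t * ⟪S x, y⟫ + ⟪S y, y⟫ := by
    simp only [map_sub, map_smul, inner_sub_left, inner_sub_right, real_inner_smul_left,
      real_inner_smul_right, hS.inner_left_eq_inner_right y x, real_inner_comm (S x) y]
    ring
  rw [hexpand] at hnonneg
  rw [← mul_le_mul_iff_right₀ ht]
  field_simp
  linarith

theorem ContinuousLinearMap.isPositive_of_norm_sq_le [CompleteSpace E] {S : E →L[ℝ] E}
    (hS : IsSelfAdjoint S) {C : ℝ} (h : ∀ v, ‖v‖ ^ 2 ≤ C ^ 2 * ⟪S v, v⟫) : S.IsPositive := by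
  refine ⟨hS.isSymmetric, fun v => ?_⟩
  change 0 ≤ ⟪S v, v⟫
  by_contra! hneg
  have hv : ‖v‖ ^ 2 ≤ 0 := (h v).trans (mul_nonpos_of_nonneg_of_nonpos (sq_nonneg C) hneg.le)
  rw [sq_nonpos_iff, norm_eq_zero] at hv
  simp [hv] at hneg

theorem ContinuousLinearMap.inner_apply_self_le_of_norm_sq_le {S : E →L[ℝ] E} (hS : S.IsPositive)
    {C : ℝ} (h : ∀ v, ‖v‖ ^ 2 ≤ C ^ 2 * ⟪S v, v⟫) (z : E) : ⟪S z, z⟫ ≤ C ^ 2 * ‖S z‖ ^ 2 := by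
  have hq : 0 ≤ ⟪S z, z⟫ := hS.re_inner_nonneg_left z
  have hsq : ⟪S z, z⟫ ^ 2 ≤ C ^ 2 * ‖S z‖ ^ 2 * ⟪S z, z⟫ :=
    calc ⟪S z, z⟫ ^ 2 ≤ (‖S z‖ * ‖z‖) ^ 2 := pow_le_pow_left₀ hq (real_inner_le_norm _ _) 2
      _ = ‖S z‖ ^ 2 * ‖z‖ ^ 2 := mul_pow _ _ 2
      _ ≤ ‖S z‖ ^ 2 * (C ^ 2 * ⟪S z, z⟫) := mul_le_mul_of_nonneg_left (h z) (sq_nonneg _)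
      _ = C ^ 2 * ‖S z‖ ^ 2 * ⟪S z, z⟫ := by ring
  nlinarith [mul_nonneg (sq_nonneg C) (sq_nonneg ‖S z‖)]

theorem ContinuousLinearMap.opNorm_le_abs_of_norm_sq_le (P : E →L[ℝ] F) {c : ℝ}
    (h : ∀ w, ‖P w‖ ^ 2 ≤ c ^ 2 * ‖w‖ ^ 2) : ‖P‖ ≤ |c| := by
  refine opNorm_le_bound _ (abs_nonneg c) fun w => ?_
  rw [← pow_le_pow_iff_left₀ (norm_nonneg _) (by positivity) two_ne_zero, mul_pow, sq_abs]
  exact h w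

theorem InnerProductSpace.toDual_symm_toDual_comp [CompleteSpace E] [CompleteSpace F]
    (P : E →L[ℝ] F) (x : F) :
    (toDual ℝ E).symm ((toDual ℝ F x : F →L[ℝ] ℝ).comp P) = adjoint P x :=
  ext_inner_right ℝ fun y => by
    rw [toDual_symm_apply, adjoint_inner_left]
    rfl

end Hilbert

theorem div_norm_sq_le_mul_div_norm_sq_of_bounds {E : Type*} [NormedAddCommGroup E] (Q : E → ℝ)
    {a K : ℝ} (hK : 0 ≤ K) (hlower : ∀ x, ‖x‖ ^ 2 ≤ a * Q x) (hupper : ∀ x, Q x ≤ K * ‖x‖ ^ 2)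
    {v w : E} (hv : v ≠ 0) (hw : w ≠ 0) :
    Q v / ‖v‖ ^ 2 ≤ a * K * (Q w / ‖w‖ ^ 2) := by
  have hv' : 0 < ‖v‖ ^ 2 := by positivity
  have hw' : 0 < ‖w‖ ^ 2 := by positivity
  calc Q v / ‖v‖ ^ 2 ≤ K := (div_le_iff₀ hv').2 (hupper v)
    _ ≤ K * (a * Q w / ‖w‖ ^ 2) := le_mul_of_one_le_right hK ((one_le_div hw').2 (hlower w))
    _ = a * K * (Q w / ‖w‖ ^ 2) := by ring

section AuxiliarySpace

variable {H : Type*} [NormedAddCommGroup H] [InnerProductSpace ℝ H] [CompleteSpace H]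
  {ι : Type*} [Fintype ι] {W : ι → Type*} [∀ j, NormedAddCommGroup (W j)]
  [∀ j, InnerProductSpace ℝ (W j)] [∀ j, CompleteSpace (W j)]
  {S Sinv : H →L[ℝ] H} {Pi : ∀ j, W j →L[ℝ] H}

variable (Sinv Pi) in
/-- The operator `B A` of the paper in Riesz form: `a` is the inner product of `H`, so `A` is the
identity, and `Π_j A_j⁻¹ Π_j*` becomes `Π_j Π_j†`. -/
noncomputable def auxiliarySpacePreconditioner : H →L[ℝ] H :=
  Sinv + ∑ j, Pi j ∘L adjoint (Pi j)

theorem auxiliarySpacePreconditioner_apply (x : H) :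
    auxiliarySpacePreconditioner Sinv Pi x = Sinv x + ∑ j, Pi j (adjoint (Pi j) x) := by
  simp [auxiliarySpacePreconditioner, sum_apply]

theorem inner_auxiliarySpacePreconditioner_apply_self (hSinv : S ∘L Sinv = .id ℝ H) (x : H) :
    ⟪auxiliarySpacePreconditioner Sinv Pi x, x⟫ =
      ⟪S (Sinv x), Sinv x⟫ + ∑ j, ‖adjoint (Pi j) x‖ ^ 2 := by
  have hx : S (Sinv x) = x := congr($hSinv x)
  rw [auxiliarySpacePreconditioner_apply, inner_add_left, sum_inner, hx, real_inner_comm]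
  congr 1
  refine Finset.sum_congr rfl fun j _ => ?_
  rw [← adjoint_inner_right, real_inner_self_eq_norm_sq]

theorem inner_auxiliarySpacePreconditioner_apply_self_le (hSinv : S ∘L Sinv = .id ℝ H)
    (hS : S.IsPositive) {cS : ℝ} (hsmoother : ∀ v, ‖v‖ ^ 2 ≤ cS ^ 2 * ⟪S v, v⟫)
    {c : ι → ℝ} (hPi : ∀ j w, ‖Pi j w‖ ^ 2 ≤ c j ^ 2 * ‖w‖ ^ 2) (x : H) :
    ⟪auxiliarySpacePreconditioner Sinv Pi x, x⟫ ≤ (cS ^ 2 + ∑ j, c j ^ 2) * ‖x‖ ^ 2 := by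
  have hsmooth : ⟪S (Sinv x), Sinv x⟫ ≤ cS ^ 2 * ‖x‖ ^ 2 := by
    simpa only [show S (Sinv x) = x from congr($hSinv x)]
      using inner_apply_self_le_of_norm_sq_le hS hsmoother (Sinv x)
  have htransfer (j : ι) : ‖adjoint (Pi j) x‖ ^ 2 ≤ c j ^ 2 * ‖x‖ ^ 2 := by
    rw [← sq_abs (c j), ← mul_pow]
    refine pow_le_pow_left₀ (norm_nonneg _) ((le_opNorm _ x).trans ?_) 2
    rw [LinearIsometryEquiv.norm_map]
    exact mul_le_mul_of_nonneg_right (opNorm_le_abs_of_norm_sq_le _ (hPi j)) (norm_nonneg x)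
  rw [inner_auxiliarySpacePreconditioner_apply_self hSinv, add_mul, Finset.sum_mul]
  exact add_le_add hsmooth (Finset.sum_le_sum fun j _ => htransfer j)

theorem norm_sq_le_inner_auxiliarySpacePreconditioner_apply_self (hSinv : S ∘L Sinv = .id ℝ H)
    (hS : S.IsPositive) {c₀ : ℝ} (hc₀ : c₀ ≠ 0)
    (hdecomp : ∀ v : H, ∃ (v₀ : H) (w : ∀ j, W j), v = v₀ + ∑ j, Pi j (w j) ∧
      ⟪S v₀, v₀⟫ + ∑ j, ‖w j‖ ^ 2 ≤ c₀ ^ 2 * ‖v‖ ^ 2) (x : H) :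
    ‖x‖ ^ 2 ≤ c₀ ^ 2 * ⟪auxiliarySpacePreconditioner Sinv Pi x, x⟫ := by
  obtain ⟨v₀, w, hdec, hstable⟩ := hdecomp x
  have ht : 0 < c₀ ^ 2 := by positivity
  have hsplit : ‖x‖ ^ 2 = ⟪S (Sinv x), v₀⟫ + ∑ j, ⟪adjoint (Pi j) x, w j⟫ := by
    rw [← real_inner_self_eq_norm_sq]
    nth_rw 2 [hdec]
    simp only [inner_add_right, inner_sum, adjoint_inner_left,
      show S (Sinv x) = x from congr($hSinv x)]
  have hsmooth := hS.two_mul_inner_le ht (Sinv x) v₀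
  have htransfer := Finset.sum_le_sum fun j (_ : j ∈ Finset.univ) =>
    isPositive_one.two_mul_inner_le ht (adjoint (Pi j) x) (w j)
  simp only [one_apply_eq_self, real_inner_self_eq_norm_sq, Finset.sum_add_distrib,
    ← Finset.mul_sum] at htransfer
  have hscaled : (c₀ ^ 2)⁻¹ * (⟪S v₀, v₀⟫ + ∑ j, ‖w j‖ ^ 2) ≤ ‖x‖ ^ 2 := by
    rw [inv_mul_le_iff₀ ht]; linarith
  rw [inner_auxiliarySpacePreconditioner_apply_self hSinv]
  linarith

end AuxiliarySpace

theorem auxiliary_space_preconditioner_general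
    {H : Type*} [NormedAddCommGroup H] [InnerProductSpace ℝ H] [CompleteSpace H]
    {J : ℕ} (W : Fin J → Type*)
    [∀ j, NormedAddCommGroup (W j)] [∀ j, InnerProductSpace ℝ (W j)]
    [∀ j, CompleteSpace (W j)]
    (Pi : ∀ j, W j →L[ℝ] H)
    (c : Fin J → ℝ)
    (cS c₀ : ℝ) (hc₀ : 0 < c₀)
    (S Sinv : H →L[ℝ] H) (hSsa : IsSelfAdjoint S)
    (hSinv₁ : S.comp Sinv = ContinuousLinearMap.id ℝ H)
    (hPi : ∀ j, ∀ w : W j, ‖Pi j w‖ ^ 2 ≤ (c j) ^ 2 * ‖w‖ ^ 2)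
    (hsmoother : ∀ v : H, ‖v‖ ^ 2 ≤ cS ^ 2 * (inner ℝ (S v) v : ℝ))
    (hdecomp : ∀ v : H, ∃ (v₀ : H) (w : ∀ j, W j),
      v = v₀ + ∑ j, Pi j (w j) ∧
      (inner ℝ (S v₀) v₀ : ℝ) + ∑ j, ‖w j‖ ^ 2 ≤ c₀ ^ 2 * ‖v‖ ^ 2)
    (T : H → H)
    (hT : ∀ v : H, T v = Sinv v + ∑ j, Pi j
      ((InnerProductSpace.toDual ℝ (W j)).symm
        (((InnerProductSpace.toDual ℝ H v) : H →L[ℝ] ℝ).comp (Pi j)))) :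
    ∀ v w : H, v ≠ 0 → w ≠ 0 →
      (inner ℝ (T v) v : ℝ) / ‖v‖ ^ 2 ≤
        c₀ ^ 2 * (cS ^ 2 + ∑ j, (c j) ^ 2) * ((inner ℝ (T w) w : ℝ) / ‖w‖ ^ 2) := by
  have hS : S.IsPositive := isPositive_of_norm_sq_le hSsa hsmoother
  have hTB : T = auxiliarySpacePreconditioner Sinv Pi := funext fun v => by
    simp only [hT, auxiliarySpacePreconditioner_apply, toDual_symm_toDual_comp]
  subst hTB
  intro v w hv hw
  exact div_norm_sq_le_mul_div_norm_sq_of_bounds _ (by positivity)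
    (norm_sq_le_inner_auxiliarySpacePreconditioner_apply_self hSinv₁ hS hc₀.ne' hdecomp)
    (inner_auxiliarySpacePreconditioner_apply_self_le hSinv₁ hS hsmoother hPi) hv hw

/-- **Auxiliary space preconditioner bound.**
`H` is a real Hilbert space with inner product `a = ⟪·,·⟫`; `W j` (`j = 1,…,J`) are
auxiliary Hilbert spaces with inner products `a_j = ⟪·,·⟫` and transfer operators
`Pi j : W j → H` with `‖Π_j w‖_A² ≤ c_j² a_j(w,w)`.  The smoother is
`s(v,w) = ⟪S v, w⟫` with `S` self-adjoint, invertible (inverse `Sinv`), and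
`‖v‖_A² ≤ c_S² s(v,v)`.  If every `v` admits a stable decomposition
`v = v₀ + Σ_j Π_j w_j` with `s(v₀,v₀) + Σ_j a_j(w_j,w_j) ≤ c₀² ‖v‖_A²`,
then the preconditioned operator `BA = S⁻¹ + Σ_j Π_j A_j⁻¹ Π_j* A`
(Riesz-map formulation, `T` below) has condition number
`κ(BA) ≤ c₀² (c_S² + c₁² + ⋯ + c_J²)`, expressed via Rayleigh quotients. -/
theorem auxiliary_space_preconditioner
    {H : Type*} [NormedAddCommGroup H] [InnerProductSpace ℝ H] [CompleteSpace H]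
    {J : ℕ} (W : Fin J → Type*)
    [∀ j, NormedAddCommGroup (W j)] [∀ j, InnerProductSpace ℝ (W j)]
    [∀ j, CompleteSpace (W j)]
    (Pi : ∀ j, W j →L[ℝ] H)
    (c : Fin J → ℝ) (hc : ∀ j, 0 < c j)
    (cS c₀ : ℝ) (hcS : 0 < cS) (hc₀ : 0 < c₀)
    (S Sinv : H →L[ℝ] H) (hSsa : IsSelfAdjoint S)
    (hSinv₁ : S.comp Sinv = ContinuousLinearMap.id ℝ H)
    (hSinv₂ : Sinv.comp S = ContinuousLinearMap.id ℝ H)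
    (hPi : ∀ j, ∀ w : W j, ‖Pi j w‖ ^ 2 ≤ (c j) ^ 2 * ‖w‖ ^ 2)
    (hsmoother : ∀ v : H, ‖v‖ ^ 2 ≤ cS ^ 2 * (inner ℝ (S v) v : ℝ))
    (hdecomp : ∀ v : H, ∃ (v₀ : H) (w : ∀ j, W j),
      v = v₀ + ∑ j, Pi j (w j) ∧
      (inner ℝ (S v₀) v₀ : ℝ) + ∑ j, ‖w j‖ ^ 2 ≤ c₀ ^ 2 * ‖v‖ ^ 2)
    (T : H → H)
    (hT : ∀ v : H, T v = Sinv v + ∑ j, Pi j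
      ((InnerProductSpace.toDual ℝ (W j)).symm
        (((InnerProductSpace.toDual ℝ H v) : H →L[ℝ] ℝ).comp (Pi j)))) :
    ∀ v w : H, v ≠ 0 → w ≠ 0 →
      (inner ℝ (T v) v : ℝ) / ‖v‖ ^ 2 ≤
        c₀ ^ 2 * (cS ^ 2 + ∑ j, (c j) ^ 2) * ((inner ℝ (T w) w : ℝ) / ‖w‖ ^ 2) :=
  auxiliary_space_preconditioner_general W Pi c cS c₀ hc₀ S Sinv hSsa hSinv₁ hPi hsmoother hdecomp T
    hT
end

section
/- Let T be a triangle cut by a C² interface Γ into T⁺ and T⁻, let β be piecewise constant with values β⁺, β⁻ and bounds 0 < β̲ ≤ β ≤ β̄, and let φ be a piecewise linear immersed finite element function on T satisfying the flux continuity condition [β ∇φ · n_Γ] = 0 on Γ. Then for any edge e of T with unit normal n_e, ‖β ∇φ · n_e‖_{L²(e)} ≤ C h^{-1/2} (1 + β̄/β̲) ‖β ∇φ‖_{L²(T)}, where h is the diameter of T and C depends only on the shape regularity of T. -/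
/-!
On each piece `β∇φ` is a constant vector, so by Cauchy–Schwarz against the unit normal `n_e` the
squared edge trace is at most `h (N⁺ + N⁻)`, where `N± = ‖β±∇φ±‖²`. The interface conditions fix the
normal component of `β∇φ` across `Γ` and let its tangential component jump only by the factor
`β⁻/β⁺ ≤ K := β̄/β̲`, so `N⁻ ≤ K² N⁺` and `N⁺ ≤ K² N⁻`. Hence
`(|T⁺| + |T⁻|)(N⁺ + N⁻) ≤ (1 + K²)(|T⁺| N⁺ + |T⁻| N⁻)`, and shape regularity `|T| ≥ ρ h²` turns
`h (N⁺ + N⁻)` into at most `ρ⁻¹ h⁻¹ (1 + K)² ‖β∇φ‖²_{0,T}`: the constant is `C = ρ^(-1/2)`.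
-/

open Module
open scoped RealInnerProductSpace

section InnerProductSpace

variable {E : Type*} [NormedAddCommGroup E] [InnerProductSpace ℝ E]

theorem norm_sq_eq_inner_sq_add_inner_sq (hE : finrank ℝ E = 2) {n t : E} (hn : ‖n‖ = 1)
    (ht : ‖t‖ = 1) (hnt : ⟪n, t⟫ = 0) (x : E) : ‖x‖ ^ 2 = ⟪x, n⟫ ^ 2 + ⟪x, t⟫ ^ 2 := by
  have hv : Orthonormal ℝ ![n, t] := by simp [hn, ht, hnt]
  let b := (basisOfOrthonormalOfCardEqFinrank hv (by simp [hE])).toOrthonormalBasis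
    (by rwa [coe_basisOfOrthonormalOfCardEqFinrank])
  have hb : ⇑b = ![n, t] := by simp [b, coe_basisOfOrthonormalOfCardEqFinrank]
  simp [← b.sum_sq_inner_left x, hb, Fin.sum_univ_two]

theorem sq_mul_inner_le_norm_smul_sq {u : E} (hu : ‖u‖ = 1) (β : ℝ) (g : E) :
    (β * ⟪g, u⟫) ^ 2 ≤ ‖β • g‖ ^ 2 := by
  rw [← real_inner_smul_left, sq_le_sq, abs_norm]
  simpa [hu] using abs_real_inner_le_norm (β • g) u

theorem norm_smul_sq_le_of_interface_conditions (hE : finrank ℝ E = 2) {n t gp gm : E}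
    (hn : ‖n‖ = 1) (ht : ‖t‖ = 1) (hnt : ⟪n, t⟫ = 0) {βp βm K : ℝ}
    (htan : ⟪gp, t⟫ = ⟪gm, t⟫) (hflux : βp * ⟪gp, n⟫ = βm * ⟪gm, n⟫)
    (hK : 1 ≤ K) (hβm : 0 ≤ βm) (hβ : βm ≤ K * βp) :
    ‖βm • gm‖ ^ 2 ≤ K ^ 2 * ‖βp • gp‖ ^ 2 := by
  have hsplit (β : ℝ) (g : E) : ‖β • g‖ ^ 2 = (β * ⟪g, n⟫) ^ 2 + β ^ 2 * ⟪g, t⟫ ^ 2 := by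
    rw [norm_sq_eq_inner_sq_add_inner_sq hE hn ht hnt, real_inner_smul_left,
      real_inner_smul_left]
    ring
  have hnormal : (βp * ⟪gp, n⟫) ^ 2 ≤ K ^ 2 * (βp * ⟪gp, n⟫) ^ 2 :=
    le_mul_of_one_le_left (sq_nonneg _) (one_le_pow₀ hK)
  have hcoef : βm ^ 2 ≤ K ^ 2 * βp ^ 2 := by
    rw [← mul_pow]; exact pow_le_pow_left₀ hβm hβ 2
  rw [hsplit, hsplit, ← hflux, ← htan]
  linarith [mul_le_mul_of_nonneg_right hcoef (sq_nonneg ⟪gp, t⟫)]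

end InnerProductSpace

theorem add_mul_add_le_one_add_mul {ap am Np Nm L : ℝ} (hap : 0 ≤ ap) (ham : 0 ≤ am)
    (hm : Nm ≤ L * Np) (hp : Np ≤ L * Nm) :
    (ap + am) * (Np + Nm) ≤ (1 + L) * (ap * Np + am * Nm) := by
  nlinarith [mul_le_mul_of_nonneg_left hm hap, mul_le_mul_of_nonneg_left hp ham]

theorem le_div_mul_of_le_of_le {lo hi x y : ℝ} (hlo : 0 < lo) (hx0 : 0 ≤ x) (hx : x ≤ hi)
    (hy : lo ≤ y) : x ≤ hi / lo * y := by
  rw [div_mul_eq_mul_div, le_div_iff₀ hlo]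
  exact mul_le_mul hx hy hlo.le (hx0.trans hx)

/-- **Edge trace estimate for IFEM functions (Lemma `trace_like`).**
`φ` is piecewise linear on the two pieces `T⁺, T⁻` of an interface triangle `T`
of diameter `h`, so `∇φ` consists of two constant vectors `gp, gm`; continuity of
`φ` across `Γ` gives continuity of the tangential component
(`⟪gp - gm, tΓ⟫ = 0`) and the IFEM flux condition gives
`βp ⟪gp, nΓ⟫ = βm ⟪gm, nΓ⟫`, where `(nΓ, tΓ)` is the orthonormal normal/tangent
frame of `Γ`.  For an edge `e` of `T` with unit normal `ne`, split by `Γ` into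
pieces of lengths `lep, lem` (so that `∫_e (β∇φ·n_e)² = lep (βp gp·ne)² + lem (βm gm·ne)²`),
and with `‖β∇φ‖²_{0,T} = ap ‖βp gp‖² + am ‖βm gm‖²` where `ap, am` are the areas
of `T⁺, T⁻` (shape regularity: `ap + am ≥ ρ h²`), one has
`‖β∇φ·n_e‖²_{0,e} ≤ C² h⁻¹ (1 + β̄/β̲)² ‖β∇φ‖²_{0,T}`
with `C` depending only on the shape-regularity parameter `ρ`. -/
theorem ifem_edge_trace_estimate :
    ∀ ρ : ℝ, 0 < ρ →
    ∃ C : ℝ, 0 < C ∧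
      ∀ (h βlo βhi βp βm lep lem ap am : ℝ)
        (nΓ tΓ ne gp gm : EuclideanSpace ℝ (Fin 2)),
        0 < h → 0 < βlo → βlo ≤ βp → βp ≤ βhi → βlo ≤ βm → βm ≤ βhi →
        ‖nΓ‖ = 1 → ‖tΓ‖ = 1 → (inner ℝ nΓ tΓ : ℝ) = 0 → ‖ne‖ = 1 →
        (inner ℝ (gp - gm) tΓ : ℝ) = 0 →
        βp * (inner ℝ gp nΓ : ℝ) = βm * (inner ℝ gm nΓ : ℝ) →
        0 ≤ lep → 0 ≤ lem → lep + lem ≤ h →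
        0 ≤ ap → 0 ≤ am → ρ * h ^ 2 ≤ ap + am →
        lep * (βp * (inner ℝ gp ne : ℝ)) ^ 2 + lem * (βm * (inner ℝ gm ne : ℝ)) ^ 2 ≤
          C ^ 2 * h⁻¹ * (1 + βhi / βlo) ^ 2 *
            (ap * ‖βp • gp‖ ^ 2 + am * ‖βm • gm‖ ^ 2) := by
  intro ρ hρ
  refine ⟨(√ρ)⁻¹, by positivity, ?_⟩
  intro h βlo βhi βp βm lep lem ap am nΓ tΓ ne gp gm hh hβlo hβp_lo hβp_hi hβm_lo hβm_hi
    hnΓ htΓ hnt hne htan hflux hlep hlem hl hap ham hshape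
  set K := βhi / βlo
  have hK : 1 ≤ K := (one_le_div hβlo).2 (hβp_lo.trans hβp_hi)
  have htan' : ⟪gp, tΓ⟫ = ⟪gm, tΓ⟫ := sub_eq_zero.1 (by rwa [← inner_sub_left])
  have hE : finrank ℝ (EuclideanSpace ℝ (Fin 2)) = 2 := by simp
  set Np := ‖βp • gp‖ ^ 2
  set Nm := ‖βm • gm‖ ^ 2
  have hβp : 0 ≤ βp := hβlo.le.trans hβp_lo
  have hβm : 0 ≤ βm := hβlo.le.trans hβm_lo
  have hNm : Nm ≤ K ^ 2 * Np := norm_smul_sq_le_of_interface_conditions hE hnΓ htΓ hnt htan'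
    hflux hK hβm (le_div_mul_of_le_of_le hβlo hβm hβm_hi hβp_lo)
  have hNp : Np ≤ K ^ 2 * Nm := norm_smul_sq_le_of_interface_conditions hE hnΓ htΓ hnt
    htan'.symm hflux.symm hK hβp (le_div_mul_of_le_of_le hβlo hβp hβp_hi hβm_lo)
  have htrace : lep * (βp * ⟪gp, ne⟫) ^ 2 + lem * (βm * ⟪gm, ne⟫) ^ 2 ≤ h * (Np + Nm) := by
    have hp : lep * (βp * ⟪gp, ne⟫) ^ 2 ≤ h * Np :=
      mul_le_mul (by linarith) (sq_mul_inner_le_norm_smul_sq hne βp gp) (sq_nonneg _) hh.le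
    have hm : lem * (βm * ⟪gm, ne⟫) ^ 2 ≤ h * Nm :=
      mul_le_mul (by linarith) (sq_mul_inner_le_norm_smul_sq hne βm gm) (sq_nonneg _) hh.le
    linarith
  calc _ ≤ h * (Np + Nm) := htrace
    _ = h⁻¹ * (h ^ 2 * (Np + Nm)) := by field_simp
    _ ≤ h⁻¹ * (ρ⁻¹ * ((ap + am) * (Np + Nm))) := by
      rw [← mul_assoc ρ⁻¹]
      gcongr h⁻¹ * (?_ * _)
      exact (le_inv_mul_iff₀ hρ).2 hshape
    _ ≤ h⁻¹ * (ρ⁻¹ * ((1 + K ^ 2) * (ap * Np + am * Nm))) := by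
      gcongr h⁻¹ * (ρ⁻¹ * ?_); exact add_mul_add_le_one_add_mul hap ham hNm hNp
    _ ≤ h⁻¹ * (ρ⁻¹ * ((1 + K) ^ 2 * (ap * Np + am * Nm))) := by
      gcongr; nlinarith
    _ = (√ρ)⁻¹ ^ 2 * h⁻¹ * (1 + K) ^ 2 * (ap * Np + am * Nm) := by
      rw [inv_pow, Real.sq_sqrt hρ.le]; ring
end

section
/- For distinct indices i, j, the off-diagonal entry of the penalty block of the EIFEM matrix, A₂₂(i,j) = Σ_{e∈E_h} |e|⁻¹ ∫_e σ(β) [ψ_j][ψ_i] ds, satisfies A₂₂(i,j) ≤ 0, with A₂₂(i,j) < 0 exactly when elements T_i and T_j share an edge; the diagonal entries satisfy A₂₂(i,i) > 0; and each row is weakly diagonally dominant: Σ_{j≠i} |A₂₂(i,j)| ≤ A₂₂(i,i), with strict inequality for any element T_i having at least one boundary edge. -/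
open Finset

/-- Per-edge characterization of the off-diagonal terms of the penalty block:
for `i ≠ j`, the edge `e` contributes `-σ e` iff `e` is an interior edge shared
by the elements `T_i` and `T_j`, and `0` otherwise. -/
theorem eifem_edge_term_offdiag
    {Elem Edge : Type*} [DecidableEq Elem]
    (isInt : Edge → Bool) (Tp Tm Tb : Edge → Elem)
    (σ : Edge → ℝ)
    (hTpm : ∀ e, isInt e = true → Tp e ≠ Tm e)
    (jcoef : Edge → Elem → ℝ)
    (hj : ∀ e k, jcoef e k =
      if isInt e then (if k = Tp e then (1 : ℝ) else if k = Tm e then -1 else 0)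
      else (if k = Tb e then (1 : ℝ) else 0)) :
    ∀ (e : Edge) (i j : Elem), i ≠ j →
      σ e * jcoef e i * jcoef e j =
      if isInt e = true ∧ ((Tp e = i ∧ Tm e = j) ∨ (Tp e = j ∧ Tm e = i))
        then -σ e else 0 := by
  intro e i j hij
  rw [hj, hj]
  by_cases hint : isInt e = true
  · have hpm := hTpm e hint
    simp only [hint, if_true, true_and]
    split_ifs <;> try ring
    all_goals (exfalso; clear hj; subst_vars)
    all_goals (try simp_all)
    all_goals aesop
  · simp only [hint, if_false]
    rw [if_neg (by tauto)]
    by_cases h1 : i = Tb e <;> by_cases h2 : j = Tb e <;> subst_vars <;> simp_all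

/-- **Structure of the piecewise-constant penalty block `A₂₂` of the EIFEM matrix.**
`Elem` and `Edge` index the elements and edges of the mesh.  An interior edge `e`
(`isInt e = true`) is shared by the two distinct elements `Tp e` and `Tm e`; a
boundary edge belongs to the single element `Tb e`.  For the indicator `ψ_k` of
element `T_k`, the (oriented, scalar) jump coefficient on `e` is
`jcoef e k = 1` if `k = Tp e`, `-1` if `k = Tm e` (interior), and `1` on the
boundary edge of `T_k`, zero otherwise; since jumps of indicators are constant
along each edge, `A₂₂(i,j) = Σ_e |e|⁻¹ ∫_e σ(β)[ψ_j][ψ_i] ds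
= Σ_e σ e · jcoef e i · jcoef e j` with penalties `σ e > 0`.  Every element has
at least one edge.  Then: off-diagonal entries are `≤ 0`, and `< 0` exactly when
the two elements share an (interior) edge; diagonal entries are `> 0`; each row
is weakly diagonally dominant, with strict dominance for any element having at
least one boundary edge. -/
theorem eifem_penalty_block_structure
    {Elem Edge : Type*} [Fintype Edge] [Fintype Elem] [DecidableEq Elem]
    (isInt : Edge → Bool) (Tp Tm Tb : Edge → Elem)
    (σ : Edge → ℝ) (hσ : ∀ e, 0 < σ e)
    (hTpm : ∀ e, isInt e = true → Tp e ≠ Tm e)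
    (jcoef : Edge → Elem → ℝ)
    (hj : ∀ e k, jcoef e k =
      if isInt e then (if k = Tp e then (1 : ℝ) else if k = Tm e then -1 else 0)
      else (if k = Tb e then (1 : ℝ) else 0))
    (A : Elem → Elem → ℝ)
    (hA : ∀ i j, A i j = ∑ e, σ e * jcoef e i * jcoef e j)
    (hcover : ∀ k, ∃ e, jcoef e k ≠ 0) :
    (∀ i j, i ≠ j → A i j ≤ 0) ∧
    (∀ i j, i ≠ j → (A i j < 0 ↔ ∃ e, isInt e = true ∧
      ((Tp e = i ∧ Tm e = j) ∨ (Tp e = j ∧ Tm e = i)))) ∧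
    (∀ i, 0 < A i i) ∧
    (∀ i, ∑ j ∈ univ.filter (· ≠ i), |A i j| ≤ A i i) ∧
    (∀ i, (∃ e, isInt e = false ∧ Tb e = i) →
      ∑ j ∈ univ.filter (· ≠ i), |A i j| < A i i) := by
  classical
  have key := eifem_edge_term_offdiag isInt Tp Tm Tb σ hTpm jcoef hj
  -- closed form for off-diagonal entries
  have Aoff : ∀ i j, i ≠ j → A i j =
      -∑ e ∈ univ.filter (fun e => isInt e = true ∧
        ((Tp e = i ∧ Tm e = j) ∨ (Tp e = j ∧ Tm e = i))), σ e := by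
    intro i j hij
    rw [hA, Finset.sum_congr rfl (fun e _ => key e i j hij), ← Finset.sum_neg_distrib,
      ← Finset.sum_filter]
  -- off-diagonal entries are nonpositive
  have hoff : ∀ i j, i ≠ j → A i j ≤ 0 := by
    intro i j hij
    rw [Aoff i j hij, neg_nonpos]
    exact Finset.sum_nonneg fun e _ => (hσ e).le
  -- negativity iff shared edge
  have hneg : ∀ i j, i ≠ j → (A i j < 0 ↔ ∃ e, isInt e = true ∧
      ((Tp e = i ∧ Tm e = j) ∨ (Tp e = j ∧ Tm e = i))) := by
    intro i j hij
    rw [Aoff i j hij]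
    constructor
    · intro h
      by_contra hc
      have hempty : (univ.filter (fun e => isInt e = true ∧
          ((Tp e = i ∧ Tm e = j) ∨ (Tp e = j ∧ Tm e = i)))) = ∅ := by
        apply Finset.filter_eq_empty_iff.mpr
        intro e _ hcond
        exact hc ⟨e, hcond⟩
      rw [hempty] at h
      simp at h
    · rintro ⟨e, he1, he2⟩
      have hmem : e ∈ univ.filter (fun e => isInt e = true ∧
          ((Tp e = i ∧ Tm e = j) ∨ (Tp e = j ∧ Tm e = i))) := by
        simp [he1, he2]
      have hpos : 0 < ∑ e ∈ univ.filter (fun e => isInt e = true ∧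
          ((Tp e = i ∧ Tm e = j) ∨ (Tp e = j ∧ Tm e = i))), σ e :=
        Finset.sum_pos (fun e _ => hσ e) ⟨e, hmem⟩
      linarith
  -- diagonal entries are positive
  have hdiag : ∀ i, 0 < A i i := by
    intro i
    rw [hA]
    obtain ⟨e, he⟩ := hcover i
    refine Finset.sum_pos' (fun e _ => ?_) ⟨e, Finset.mem_univ e, ?_⟩
    · have : 0 ≤ jcoef e i * jcoef e i := mul_self_nonneg _
      nlinarith [hσ e]
    · have : 0 < jcoef e i * jcoef e i := mul_self_pos.mpr he
      nlinarith [hσ e]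
  -- sum over all elements of the jump coefficients on an edge
  have hsumj : ∀ e, ∑ j, jcoef e j = if isInt e then (0 : ℝ) else 1 := by
    intro e
    by_cases hint : isInt e = true
    · have hpm := hTpm e hint
      simp only [hint, if_true]
      have : ∀ j : Elem, jcoef e j =
          (if j = Tp e then (1 : ℝ) else 0) + (if j = Tm e then (-1 : ℝ) else 0) := by
        intro j
        rw [hj]
        simp only [hint, if_true]
        split_ifs with h1 h2 h3 <;> try norm_num
        · exact absurd (h1.symm.trans h2) hpm
      rw [Finset.sum_congr rfl fun j _ => this j, Finset.sum_add_distrib]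
      simp
    · simp only [hint, if_false]
      have hb : isInt e = false := by simpa using hint
      have : ∀ j : Elem, jcoef e j = if j = Tb e then (1 : ℝ) else 0 := by
        intro j; rw [hj]; simp [hb]
      rw [Finset.sum_congr rfl fun j _ => this j]
      simp
  -- row sums
  have hrow : ∀ i, ∑ j, A i j =
      ∑ e ∈ univ.filter (fun e => isInt e = false ∧ Tb e = i), σ e := by
    intro i
    have : ∑ j, A i j = ∑ e, σ e * jcoef e i * (∑ j, jcoef e j) := by
      simp only [hA]
      rw [Finset.sum_comm]
      exact Finset.sum_congr rfl fun e _ => by rw [Finset.mul_sum]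
    rw [this]
    have heq : ∀ e, σ e * jcoef e i * (∑ j, jcoef e j) =
        if isInt e = false ∧ Tb e = i then σ e else 0 := by
      intro e
      by_cases hint : isInt e = true
      · rw [hsumj e, if_pos hint, mul_zero, if_neg (by simp [hint])]
      · have hb : isInt e = false := by simpa using hint
        rw [hsumj e, if_neg hint, mul_one, hj]
        simp only [hb, Bool.false_eq_true, if_false]
        by_cases hTbi : i = Tb e <;> simp [hTbi, eq_comm]
    rw [Finset.sum_congr rfl fun e _ => heq e, ← Finset.sum_filter]
  -- decomposition of the full row sum
  have hsplit : ∀ i, ∑ j, A i j = A i i + ∑ j ∈ univ.filter (· ≠ i), A i j := by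
    intro i
    rw [Finset.filter_ne', ← Finset.add_sum_erase univ (A i) (Finset.mem_univ i)]
  -- absolute values of off-diagonal entries
  have habs : ∀ i, ∑ j ∈ univ.filter (· ≠ i), |A i j| =
      -∑ j ∈ univ.filter (· ≠ i), A i j := by
    intro i
    rw [← Finset.sum_neg_distrib]
    apply Finset.sum_congr rfl
    intro j hjmem
    have hji : j ≠ i := (Finset.mem_filter.mp hjmem).2
    exact abs_of_nonpos (hoff i j (Ne.symm hji))
  -- weak diagonal dominance
  have hdom : ∀ i, ∑ j ∈ univ.filter (· ≠ i), |A i j| ≤ A i i := by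
    intro i
    rw [habs i]
    have h1 := hsplit i
    have h2 := hrow i
    have h3 : 0 ≤ ∑ e ∈ univ.filter (fun e => isInt e = false ∧ Tb e = i), σ e :=
      Finset.sum_nonneg fun e _ => (hσ e).le
    linarith
  -- strict dominance for elements with a boundary edge
  have hstrict : ∀ i, (∃ e, isInt e = false ∧ Tb e = i) →
      ∑ j ∈ univ.filter (· ≠ i), |A i j| < A i i := by
    intro i ⟨e, he1, he2⟩
    rw [habs i]
    have h1 := hsplit i
    have h2 := hrow i
    have hmem : e ∈ univ.filter (fun e => isInt e = false ∧ Tb e = i) := by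
      simp [he1, he2]
    have h3 : 0 < ∑ e ∈ univ.filter (fun e => isInt e = false ∧ Tb e = i), σ e :=
      Finset.sum_pos (fun e _ => hσ e) ⟨e, hmem⟩
    linarith
  exact ⟨hoff, hneg, hdiag, hdom, hstrict⟩
end
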